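/- Along the constraint z_o = F(z_i) (defined by ψ_{k_1}(z_i) = ψ_{k_2}(z_o)), one has z_i · d/dz_i [log( z_i/(p_{k_1}(z_i) p_{k_2−1}(F(z_i))) )] = H(z_i, z_o)/(1 + φ_{k_2−1}(z_o) − φ_{k_2}(z_o)), where H(z_i,z_o) = (1 − φ_{k_1}(z_i))(1 − φ_{k_2}(z_o)) − φ_{k_1−1}(z_i)φ_{k_2−1}(z_o). -/

import Mathlib

open Real Filter Set

/-- `truncExpSum k z = Σ_{j≥k} z^j/j!`. -/
noncomputable def truncExpSum (k : ℕ) (z : ℝ) : ℝ :=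
  ∑' j : ℕ, if k ≤ j then z ^ j / (Nat.factorial j : ℝ) else 0

/-- `poisTail k z = P(Poi(z) ≥ k) = e^{-z} Σ_{j≥k} z^j/j!`. -/
noncomputable def poisTail (k : ℕ) (z : ℝ) : ℝ := Real.exp (-z) * truncExpSum k z

/-- Mean of Poisson(z) conditioned on being ≥ k: `ψ_k(z) = z f_{k-1}(z)/f_k(z)`. -/
noncomputable def truncMean (k : ℕ) (z : ℝ) : ℝ :=
  z * truncExpSum (k - 1) z / truncExpSum k z

/-- Second moment of the truncated Poisson. -/
noncomputable def truncSecondMoment (k : ℕ) (z : ℝ) : ℝ :=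
  (∑' j : ℕ, if k ≤ j then (j : ℝ) ^ 2 * z ^ j / (Nat.factorial j : ℝ) else 0)
    / truncExpSum k z

/-- Variance of the truncated Poisson. -/
noncomputable def truncVar (k : ℕ) (z : ℝ) : ℝ :=
  truncSecondMoment k z - (truncMean k z) ^ 2

/-- `φ_r(z) = z·P(Poi(z)=r−1)/P(Poi(z)≥r)` for `r ≥ 1`, with `φ_0 := 0`. -/
noncomputable def phiP (r : ℕ) (z : ℝ) : ℝ :=
  if r = 0 then 0
  else z * (Real.exp (-z) * z ^ (r - 1) / (Nat.factorial (r - 1) : ℝ)) / poisTail r z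

/-- `H(z_i,z_o) = (1 − φ_{k_1}(z_i))(1 − φ_{k_2}(z_o)) − φ_{k_1−1}(z_i)φ_{k_2−1}(z_o)`. -/
noncomputable def Hfun (k1 k2 : ℕ) (zi zo : ℝ) : ℝ :=
  (1 - phiP k1 zi) * (1 - phiP k2 zo) - phiP (k1 - 1) zi * phiP (k2 - 1) zo

/-- `Ψ(z_i,z_o) = max{ z_i/(p_{k_1}(z_i)p_{k_2−1}(z_o)), z_o/(p_{k_2}(z_o)p_{k_1−1}(z_i)) }`. -/
noncomputable def Psi (k1 k2 : ℕ) (zi zo : ℝ) : ℝ :=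
  max (zi / (poisTail k1 zi * poisTail (k2 - 1) zo))
      (zo / (poisTail k2 zo * poisTail (k1 - 1) zi))

/-! Since `poisTail k z = exp (-z) * truncExpSum k z` and `truncExpSum (k + 1)' = truncExpSum k`,
the logarithmic derivative of `p_k` is `φ_k / z`, and the truncated mean `ψ_k` has derivative
`Var_k / z`, where `Var_k = ψ_k (1 + φ_{k-1} - φ_k)` is the variance of `Poi(z)` conditioned on
`≥ k`. Being `∑_{j ≥ k} (j - ψ_k)² P(Poi(z) = j) / p_k(z)`, this variance is positive, so `ψ_{k₂}`
is strictly increasing on `(0, ∞)`. This global injectivity (`F` is not assumed continuous) lets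
the inverse function theorem identify `F` near `z_i` with `ψ_{k₂}⁻¹ ∘ ψ_{k₁}`, so that
`F'(z_i) = (z_o / z_i) (1 + φ_{k₁-1}(z_i) - φ_{k₁}(z_i)) / (1 + φ_{k₂-1}(z_o) - φ_{k₂}(z_o))`.
The chain rule applied to `log z - log p_{k₁}(z) - log p_{k₂-1}(F z)` then gives the claim. -/

open scoped Topology Nat

noncomputable def truncExpTerm (k : ℕ) (z : ℝ) (j : ℕ) : ℝ :=
  if k ≤ j then z ^ j / j ! else 0

section TruncExpSum

variable (k : ℕ) (z : ℝ)

lemma hasSum_truncExpTerm :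
    HasSum (truncExpTerm k z) (Real.exp z - ∑ j ∈ Finset.range k, z ^ j / j !) := by
  have hexp : HasSum (fun j => z ^ j / j !) (Real.exp z) :=
    Real.exp_eq_exp_ℝ ▸ NormedSpace.expSeries_div_hasSum_exp z
  rw [← hasSum_nat_add_iff' k] at hexp ⊢
  have hhead : ∑ j ∈ Finset.range k, truncExpTerm k z j = 0 :=
    Finset.sum_eq_zero fun j hj => if_neg (by simpa using hj)
  rw [hhead, sub_zero]
  simpa [truncExpTerm] using hexp

lemma hasSum_truncExpSum : HasSum (truncExpTerm k z) (truncExpSum k z) :=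
  (hasSum_truncExpTerm k z).summable.hasSum

lemma truncExpSum_eq_exp_sub_sum :
    truncExpSum k z = Real.exp z - ∑ j ∈ Finset.range k, z ^ j / j ! :=
  (hasSum_truncExpTerm k z).tsum_eq

lemma truncExpSum_sub_truncExpSum_succ :
    truncExpSum k z - truncExpSum (k + 1) z = z ^ k / k ! := by
  simp only [truncExpSum_eq_exp_sub_sum, Finset.sum_range_succ]
  ring

lemma contDiff_truncExpSum {n : WithTop ℕ∞} : ContDiff ℝ n (truncExpSum k) := by
  rw [funext (truncExpSum_eq_exp_sub_sum k)]
  fun_prop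

lemma hasDerivAt_truncExpSum_succ : HasDerivAt (truncExpSum (k + 1)) (truncExpSum k z) z := by
  induction k with
  | zero =>
    have h : truncExpSum 1 = fun w => Real.exp w - 1 :=
      funext fun w => by simp [truncExpSum_eq_exp_sub_sum]
    rw [h, truncExpSum_eq_exp_sub_sum]
    simpa using (Real.hasDerivAt_exp z).sub_const 1
  | succ k ih =>
    have hsplit : truncExpSum (k + 2) = fun w => truncExpSum (k + 1) w - w ^ (k + 1) / (k + 1)! :=
      funext fun w => by linarith [truncExpSum_sub_truncExpSum_succ (k + 1) w]
    rw [hsplit]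
    refine (ih.sub ((hasDerivAt_pow (k + 1) z).div_const ((k + 1)! : ℝ))).congr_deriv ?_
    have hcoeff : ((k + 1 : ℕ) : ℝ) * z ^ (k + 1 - 1) / (k + 1)! = z ^ k / k ! := by
      rw [Nat.add_sub_cancel, Nat.factorial_succ]; push_cast; field_simp
    rw [hcoeff, ← truncExpSum_sub_truncExpSum_succ k z]
    ring

lemma succ_mul_truncExpTerm_succ (j : ℕ) :
    ((j + 1 : ℕ) : ℝ) * truncExpTerm (k + 1) z (j + 1) = z * truncExpTerm k z j := by
  simp only [truncExpTerm, add_le_add_iff_right]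
  split_ifs
  · rw [Nat.factorial_succ]; push_cast; field_simp; ring
  · simp

lemma hasSum_mul_truncExpTerm :
    HasSum (fun j : ℕ => (j : ℝ) * truncExpTerm (k + 1) z j) (z * truncExpSum k z) := by
  rw [← hasSum_nat_add_iff' 1, Finset.sum_range_one, Nat.cast_zero, zero_mul, sub_zero]
  exact ((hasSum_truncExpSum k z).mul_left z).congr_fun (succ_mul_truncExpTerm_succ k z)

lemma hasSum_mul_sub_one_mul_truncExpTerm :
    HasSum (fun j : ℕ => (j : ℝ) * (j - 1) * truncExpTerm (k + 2) z j)
      (z ^ 2 * truncExpSum k z) := by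
  rw [← hasSum_nat_add_iff' 1, Finset.sum_range_one, Nat.cast_zero, zero_mul, zero_mul, sub_zero,
    sq, mul_assoc]
  refine ((hasSum_mul_truncExpTerm k z).mul_left z).congr_fun fun j => ?_
  rw [mul_left_comm z, ← succ_mul_truncExpTerm_succ]
  push_cast
  ring

end TruncExpSum

section TruncatedPoisson

variable {k : ℕ} {z : ℝ}

lemma truncExpSum_pos (k : ℕ) (hz : 0 < z) : 0 < truncExpSum k z := by
  refine hasSum_lt (f := 0) (i := k) (fun j => ?_) ?_ hasSum_zero (hasSum_truncExpSum k z)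
  · unfold truncExpTerm; split_ifs <;> positivity
  · simp only [truncExpTerm, le_refl, if_true, Pi.zero_apply]; positivity

lemma truncMean_pos (k : ℕ) (hz : 0 < z) : 0 < truncMean k z := by
  have := truncExpSum_pos (k - 1) hz
  have := truncExpSum_pos k hz
  unfold truncMean
  positivity

lemma truncMean_add_two (m : ℕ) (z : ℝ) :
    truncMean (m + 2) z = z * truncExpSum (m + 1) z / truncExpSum (m + 2) z :=
  rfl

lemma poisTail_pos (k : ℕ) (hz : 0 < z) : 0 < poisTail k z :=
  mul_pos (Real.exp_pos _) (truncExpSum_pos k hz)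

lemma truncSecondMoment_eq (m : ℕ) (z : ℝ) :
    truncSecondMoment (m + 2) z
      = (z ^ 2 * truncExpSum m z + z * truncExpSum (m + 1) z) / truncExpSum (m + 2) z := by
  have hsq : HasSum (fun j : ℕ => (j : ℝ) ^ 2 * truncExpTerm (m + 2) z j)
      (z ^ 2 * truncExpSum m z + z * truncExpSum (m + 1) z) :=
    ((hasSum_mul_sub_one_mul_truncExpTerm m z).add (hasSum_mul_truncExpTerm (m + 1) z)).congr_fun
      fun j => by ring
  rw [truncSecondMoment, ← hsq.tsum_eq]
  congr 2
  funext j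
  simp only [truncExpTerm, mul_ite, mul_zero, mul_div_assoc]

lemma hasSum_sq_sub_truncMean_mul_truncExpTerm (hk : 2 ≤ k) (hz : 0 < z) :
    HasSum (fun j : ℕ => ((j : ℝ) - truncMean k z) ^ 2 * truncExpTerm k z j)
      (truncExpSum k z * truncVar k z) := by
  obtain ⟨m, rfl⟩ : ∃ m, k = m + 2 := ⟨k - 2, by omega⟩
  have hc := (truncExpSum_pos (m + 2) hz).ne'
  set μ := truncMean (m + 2) z with hμ
  -- `(j - μ)² = j (j - 1) + j - 2 μ j + μ²`
  have hsum := (((hasSum_mul_sub_one_mul_truncExpTerm m z).add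
    (hasSum_mul_truncExpTerm (m + 1) z)).sub
    ((hasSum_mul_truncExpTerm (m + 1) z).mul_left (2 * μ))).add
    ((hasSum_truncExpSum (m + 2) z).mul_left (μ ^ 2))
  have hval : truncExpSum (m + 2) z * truncVar (m + 2) z
      = z ^ 2 * truncExpSum m z + z * truncExpSum (m + 1) z - 2 * μ * (z * truncExpSum (m + 1) z)
        + μ ^ 2 * truncExpSum (m + 2) z := by
    rw [truncVar, truncSecondMoment_eq, hμ, truncMean_add_two]
    field_simp
    ring
  rw [hval]
  exact hsum.congr_fun fun j => by ring

lemma truncVar_pos (hk : 2 ≤ k) (hz : 0 < z) : 0 < truncVar k z := by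
  have hterm : ∀ j : ℕ, 0 ≤ ((j : ℝ) - truncMean k z) ^ 2 * truncExpTerm k z j := fun j => by
    unfold truncExpTerm; split_ifs <;> positivity
  -- the deviations at `j = k` and `j = k + 1` cannot both vanish
  obtain ⟨j, hkj, hj⟩ : ∃ j : ℕ, k ≤ j ∧ (j : ℝ) ≠ truncMean k z := by
    by_cases h : (k : ℝ) = truncMean k z
    · exact ⟨k + 1, by omega, by push_cast; linarith⟩
    · exact ⟨k, le_rfl, h⟩
  have hpos : 0 < truncExpSum k z * truncVar k z := by
    refine hasSum_lt (f := 0) (i := j) hterm ?_ hasSum_zero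
      (hasSum_sq_sub_truncMean_mul_truncExpTerm hk hz)
    simp only [truncExpTerm, hkj, if_true, Pi.zero_apply]
    have : (j : ℝ) - truncMean k z ≠ 0 := sub_ne_zero.mpr hj
    positivity
  exact pos_of_mul_pos_right hpos (truncExpSum_pos k hz).le

lemma phiP_succ (m : ℕ) (z : ℝ) :
    phiP (m + 1) z = z * (truncExpSum m z - truncExpSum (m + 1) z) / truncExpSum (m + 1) z := by
  rw [phiP, if_neg m.succ_ne_zero, Nat.add_sub_cancel, truncExpSum_sub_truncExpSum_succ, poisTail,
    mul_div_assoc (Real.exp _), mul_div_assoc, mul_div_mul_left _ _ (Real.exp_pos _).ne',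
    ← mul_div_assoc]

lemma hasDerivAt_log_poisTail (hk : 1 ≤ k) (hz : 0 < z) :
    HasDerivAt (fun w => Real.log (poisTail k w)) (phiP k z / z) z := by
  obtain ⟨m, rfl⟩ : ∃ m, k = m + 1 := ⟨k - 1, by omega⟩
  have hp := (((hasDerivAt_neg z).exp).fun_mul (hasDerivAt_truncExpSum_succ m z)).log
    (mul_pos (Real.exp_pos _) (truncExpSum_pos (m + 1) hz)).ne'
  refine hp.congr_deriv ?_
  have hb := (truncExpSum_pos (m + 1) hz).ne'
  rw [phiP_succ]
  field_simp
  ring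

lemma hasDerivAt_truncMean (hk : 2 ≤ k) (hz : 0 < z) :
    HasDerivAt (truncMean k) (truncVar k z / z) z := by
  obtain ⟨m, rfl⟩ : ∃ m, k = m + 2 := ⟨k - 2, by omega⟩
  have hc := (truncExpSum_pos (m + 2) hz).ne'
  refine (((hasDerivAt_id' z).fun_mul (hasDerivAt_truncExpSum_succ m z)).div
    (hasDerivAt_truncExpSum_succ (m + 1) z) hc).congr_deriv ?_
  rw [truncVar, truncSecondMoment_eq, truncMean_add_two]
  field_simp
  ring

lemma truncVar_eq_truncMean_mul (hk : 2 ≤ k) (hz : 0 < z) :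
    truncVar k z = truncMean k z * (1 + phiP (k - 1) z - phiP k z) := by
  obtain ⟨m, rfl⟩ : ∃ m, k = m + 2 := ⟨k - 2, by omega⟩
  have hb := (truncExpSum_pos (m + 1) hz).ne'
  have hc := (truncExpSum_pos (m + 2) hz).ne'
  rw [truncVar, truncSecondMoment_eq, truncMean_add_two, show m + 2 - 1 = m + 1 from rfl, phiP_succ,
    phiP_succ]
  field_simp
  ring

lemma one_add_phiP_sub_phiP_pos (hk : 2 ≤ k) (hz : 0 < z) :
    0 < 1 + phiP (k - 1) z - phiP k z := by
  have h := truncVar_pos hk hz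
  rw [truncVar_eq_truncMean_mul hk hz] at h
  exact pos_of_mul_pos_right h (truncMean_pos k hz).le

lemma strictMonoOn_truncMean (hk : 2 ≤ k) : StrictMonoOn (truncMean k) (Ioi 0) := by
  refine strictMonoOn_of_hasDerivWithinAt_pos (f' := fun x => truncVar k x / x) (convex_Ioi 0)
    (fun x hx => (hasDerivAt_truncMean hk hx).continuousAt.continuousWithinAt)
    (fun x hx => ?_) (fun x hx => ?_) <;> rw [interior_Ioi] at hx
  · exact (hasDerivAt_truncMean hk hx).hasDerivWithinAt
  · exact div_pos (truncVar_pos hk hx) hx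

lemma hasStrictDerivAt_truncMean (hk : 2 ≤ k) (hz : 0 < z) :
    HasStrictDerivAt (truncMean k) (truncVar k z / z) z := by
  have hsmooth : ContDiffAt ℝ 1 (truncMean k) z :=
    (contDiffAt_id.mul (contDiff_truncExpSum (k - 1)).contDiffAt).div
      (contDiff_truncExpSum k).contDiffAt (truncExpSum_pos k hz).ne'
  simpa only [(hasDerivAt_truncMean hk hz).deriv] using hsmooth.hasStrictDerivAt one_ne_zero

end TruncatedPoisson

theorem HasStrictDerivAt.hasDerivAt_of_comp_eq {𝕜 : Type*} [NontriviallyNormedField 𝕜]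
    [CompleteSpace 𝕜] {f g F : 𝕜 → 𝕜} {s : Set 𝕜} {x a b : 𝕜}
    (hf : HasStrictDerivAt f b (F x)) (hb : b ≠ 0) (hg : HasDerivAt g a x)
    (hs : s ∈ 𝓝 (F x)) (hinj : InjOn f s) (hF : ∀ᶠ z in 𝓝 x, F z ∈ s ∧ f (F z) = g z) :
    HasDerivAt F (a / b) x := by
  set finv := hf.localInverse f b (F x) hb
  have hgx : f (F x) = g x := hF.self_of_nhds.2
  have hfinv : HasDerivAt finv b⁻¹ (g x) := hgx ▸ (hf.to_localInverse hb).hasDerivAt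
  have hfinvgx : finv (g x) = F x := hgx ▸ (hf.eventually_left_inverse hb).self_of_nhds
  have hfinvg_mem : ∀ᶠ z in 𝓝 x, finv (g z) ∈ s :=
    (hfinv.continuousAt.comp hg.continuousAt).eventually (by rwa [Function.comp_apply, hfinvgx])
  have hffinvg : ∀ᶠ z in 𝓝 x, f (finv (g z)) = g z :=
    hg.continuousAt.eventually (hgx ▸ hf.eventually_right_inverse hb)
  have hFeq : F =ᶠ[𝓝 x] finv ∘ g := by
    filter_upwards [hF, hfinvg_mem, hffinvg] with z ⟨hFz, hfF⟩ hmem hffinv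
    exact hinj hFz hmem (hfF.trans hffinv.symm)
  rw [div_eq_inv_mul]
  exact (hfinv.comp x hg).congr_of_eventuallyEq hFeq

/-- along the constraint `z_o = F(z_i)`,
`z_i · d/dz_i log( z_i/(p_{k_1}(z_i) p_{k_2−1}(F(z_i))) )
  = H(z_i,z_o)/(1 + φ_{k_2−1}(z_o) − φ_{k_2}(z_o))`. -/
theorem stmt13 (k1 k2 : ℕ) (h1 : 2 ≤ k1) (h2 : 2 ≤ k2) (F : ℝ → ℝ)
    (hF : ∀ z : ℝ, 0 < z → 0 < F z ∧ truncMean k2 (F z) = truncMean k1 z)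
    (zi : ℝ) (hzi : 0 < zi) :
    HasDerivAt (fun z : ℝ => Real.log (z / (poisTail k1 z * poisTail (k2 - 1) (F z))))
      (Hfun k1 k2 zi (F zi) / (zi * (1 + phiP (k2 - 1) (F zi) - phiP k2 (F zi)))) zi := by
  obtain ⟨hzo, hmean⟩ := hF zi hzi
  have hF' : HasDerivAt F ((truncVar k1 zi / zi) / (truncVar k2 (F zi) / F zi)) zi :=
    (hasStrictDerivAt_truncMean h2 hzo).hasDerivAt_of_comp_eq
      (div_pos (truncVar_pos h2 hzo) hzo).ne' (hasDerivAt_truncMean h1 hzi) (Ioi_mem_nhds hzo)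
      (strictMonoOn_truncMean h2).injOn (eventually_gt_nhds hzi |>.mono fun z hz => hF z hz)
  have hsplit : (fun z => Real.log (z / (poisTail k1 z * poisTail (k2 - 1) (F z))))
      =ᶠ[𝓝 zi] fun z =>
        Real.log z - Real.log (poisTail k1 z) - Real.log (poisTail (k2 - 1) (F z)) := by
    filter_upwards [eventually_gt_nhds hzi] with z hz
    have hp1 := (poisTail_pos k1 hz).ne'
    have hp2 := (poisTail_pos (k2 - 1) (hF z hz).1).ne'
    rw [Real.log_div hz.ne' (mul_ne_zero hp1 hp2), Real.log_mul hp1 hp2, sub_sub]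
  have hlog := ((Real.hasDerivAt_log hzi.ne').sub
    (hasDerivAt_log_poisTail (k := k1) (by omega) hzi)).sub
    ((hasDerivAt_log_poisTail (k := k2 - 1) (by omega) hzo).comp zi hF')
  refine (hlog.congr_of_eventuallyEq hsplit).congr_deriv ?_
  have hB2 := (one_add_phiP_sub_phiP_pos h2 hzo).ne'
  have hμ := (truncMean_pos k1 hzi).ne'
  rw [truncVar_eq_truncMean_mul h1 hzi, truncVar_eq_truncMean_mul h2 hzo, hmean, Hfun]
  field_simp
  ring
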